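/- Let I be an instance of SPA-ST. Any two super-stable matchings in I have the same cardinality. -/

import Mathlib

open scoped Classical

/-- An instance of the Student-Project Allocation problem with lecturer
preferences over students, with Ties (SPA-ST).  `sPref s p q` means student `s`
ranks project `p` at least as highly as project `q` (`p ⪰_s q`); `lPref k t t'`
means lecturer `k` ranks student `t` at least as highly as student `t'`. -/
structure SPAST (S P L : Type) [Fintype S] [Fintype P] [Fintype L]
    [DecidableEq S] [DecidableEq P] [DecidableEq L] where
  /-- the lecturer offering each project -/
  lec : P → L
  /-- project capacities -/
  c : P → ℕ
  /-- lecturer capacities -/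
  d : L → ℕ
  cpos : ∀ p : P, 0 < c p
  dpos : ∀ k : L, 0 < d k
  /-- the set of projects acceptable to each student -/
  acc : S → Finset P
  sPref : S → P → P → Prop
  lPref : L → S → S → Prop
  sRefl : ∀ s : S, ∀ p ∈ acc s, sPref s p p
  sTrans : ∀ s : S, ∀ p ∈ acc s, ∀ q ∈ acc s, ∀ r ∈ acc s,
    sPref s p q → sPref s q r → sPref s p r
  sTotal : ∀ s : S, ∀ p ∈ acc s, ∀ q ∈ acc s, sPref s p q ∨ sPref s q p
  lRefl : ∀ k : L, ∀ t : S, (∃ p ∈ acc t, lec p = k) → lPref k t t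
  lTrans : ∀ k : L, ∀ t1 t2 t3 : S,
    (∃ p ∈ acc t1, lec p = k) → (∃ p ∈ acc t2, lec p = k) → (∃ p ∈ acc t3, lec p = k) →
    lPref k t1 t2 → lPref k t2 t3 → lPref k t1 t3
  lTotal : ∀ k : L, ∀ t1 t2 : S,
    (∃ p ∈ acc t1, lec p = k) → (∃ p ∈ acc t2, lec p = k) →
    lPref k t1 t2 ∨ lPref k t2 t1
  capLB : ∀ p : P, c p ≤ d (lec p)
  capUB : ∀ k : L, d k ≤ ∑ p ∈ Finset.univ.filter (fun p => lec p = k), c p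

namespace SPAST

variable {S P L : Type} [Fintype S] [Fintype P] [Fintype L]
  [DecidableEq S] [DecidableEq P] [DecidableEq L]

/-- `M` is a matching: pairs are acceptable, each student is matched at most once,
and project and lecturer capacities are respected. -/
def IsMatching (I : SPAST S P L) (M : Finset (S × P)) : Prop :=
  (∀ x ∈ M, x.2 ∈ I.acc x.1) ∧
  (∀ s : S, ∀ p q : P, (s, p) ∈ M → (s, q) ∈ M → p = q) ∧
  (∀ p : P, (M.filter (fun x => x.2 = p)).card ≤ I.c p) ∧
  (∀ k : L, (M.filter (fun x => I.lec x.2 = k)).card ≤ I.d k)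

/-- The set `M(p)` of students assigned to project `p` in `M`. -/
def projAsg (M : Finset (S × P)) (p : P) : Finset S :=
  (M.filter (fun x => x.2 = p)).image Prod.fst

/-- The set `M(l_k)` of students assigned to lecturer `k` in `M`. -/
def lecAsg (I : SPAST S P L) (M : Finset (S × P)) (k : L) : Finset S :=
  (M.filter (fun x => I.lec x.2 = k)).image Prod.fst

/-- `t` is a least-preferred (worst) student of lecturer `k` in the set `T`. -/
def WorstIn (I : SPAST S P L) (k : L) (T : Finset S) (t : S) : Prop :=
  t ∈ T ∧ ∀ t' ∈ T, I.lPref k t' t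

/-- `(s, p)` is a super-blocking pair for `M`. -/
def SuperBlocking (I : SPAST S P L) (M : Finset (S × P)) (s : S) (p : P) : Prop :=
  p ∈ I.acc s ∧ (s, p) ∉ M ∧
  (∀ q : P, (s, q) ∈ M → ¬(I.sPref s q p ∧ ¬I.sPref s p q)) ∧
  (((projAsg M p).card < I.c p ∧ (lecAsg I M (I.lec p)).card < I.d (I.lec p)) ∨
   ((projAsg M p).card < I.c p ∧ (lecAsg I M (I.lec p)).card = I.d (I.lec p) ∧
     (s ∈ lecAsg I M (I.lec p) ∨
      ∃ t : S, WorstIn I (I.lec p) (lecAsg I M (I.lec p)) t ∧ I.lPref (I.lec p) s t)) ∨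
   ((projAsg M p).card = I.c p ∧
     ∃ t : S, WorstIn I (I.lec p) (projAsg M p) t ∧ I.lPref (I.lec p) s t))

/-- `(s, p)` is a weakly-blocking pair for `M`. -/
def WeakBlocking (I : SPAST S P L) (M : Finset (S × P)) (s : S) (p : P) : Prop :=
  p ∈ I.acc s ∧ (s, p) ∉ M ∧
  (∀ q : P, (s, q) ∈ M → I.sPref s p q ∧ ¬I.sPref s q p) ∧
  (((projAsg M p).card < I.c p ∧ (lecAsg I M (I.lec p)).card < I.d (I.lec p)) ∨
   ((projAsg M p).card < I.c p ∧ (lecAsg I M (I.lec p)).card = I.d (I.lec p) ∧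
     (s ∈ lecAsg I M (I.lec p) ∨
      ∃ t : S, WorstIn I (I.lec p) (lecAsg I M (I.lec p)) t ∧
        (I.lPref (I.lec p) s t ∧ ¬I.lPref (I.lec p) t s))) ∨
   ((projAsg M p).card = I.c p ∧
     ∃ t : S, WorstIn I (I.lec p) (projAsg M p) t ∧
       (I.lPref (I.lec p) s t ∧ ¬I.lPref (I.lec p) t s)))

/-- `M` is a super-stable matching in `I`. -/
def SuperStable (I : SPAST S P L) (M : Finset (S × P)) : Prop :=
  I.IsMatching M ∧ ∀ (s : S) (p : P), ¬SuperBlocking I M s p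

/-- `M` is a weakly stable matching in `I`. -/
def WeaklyStable (I : SPAST S P L) (M : Finset (S × P)) : Prop :=
  I.IsMatching M ∧ ∀ (s : S) (p : P), ¬WeakBlocking I M s p

/-- `I` is an SPA-S instance: all preference lists are strictly ordered
(the preorders are antisymmetric). -/
def StrictPrefs (I : SPAST S P L) : Prop :=
  (∀ s : S, ∀ p ∈ I.acc s, ∀ q ∈ I.acc s, I.sPref s p q → I.sPref s q p → p = q) ∧
  (∀ k : L, ∀ t t' : S, (∃ p ∈ I.acc t, I.lec p = k) → (∃ p ∈ I.acc t', I.lec p = k) →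
    I.lPref k t t' → I.lPref k t' t → t = t')

/-- `I'` is an SPA-S instance obtained from `I` by breaking the ties. -/
def TieBreaking (I I' : SPAST S P L) : Prop :=
  I'.lec = I.lec ∧ I'.c = I.c ∧ I'.d = I.d ∧ I'.acc = I.acc ∧
  StrictPrefs I' ∧
  (∀ (s : S) (p q : P), I.sPref s p q → ¬I.sPref s q p →
    I'.sPref s p q ∧ ¬I'.sPref s q p) ∧
  (∀ (k : L) (t t' : S), I.lPref k t t' → ¬I.lPref k t' t →
    I'.lPref k t t' ∧ ¬I'.lPref k t' t)

end SPAST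

/-!
Break all ties by fixed ranks and an enumeration of the pairs. Students then keep their best pair
and lecturers choose greedily within project and lecturer capacities; the number of pairs either
side keeps is monotone in the set offered (the law of aggregate demand), and the number the
lecturers keep is an explicit function of the project counts. For a super-stable matching `M`, let
`X_M` (resp. `Y_M`) be `M` together with the acceptable pairs that the student ranks below
(resp. not below) its partner. Super-stability makes the lecturers reject exactly `Y_M \ M` from
`Y_M`, whatever the tie-breaking, so `(X_M, Y_M)` is a fixed point of the monotone operator
`(X, Y) ↦ (E \ R_L(Y), E \ R_S(X))`, where `E` is the set of acceptable pairs, `R` stands for the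
rejected pairs and `C` for the kept ones. The least fixed point `(X, Y)` has `X ⊆ X_M` and
`Y_M ⊆ Y`, whence `|M| = |C_L(Y_M)| ≤ |C_L(Y)| = |C_S(X)| ≤ |C_S(X_M)| = |M|`, a value independent of `M`.
-/

open Finset

theorem Finset.sum_add_eq_sum_add_of_eq_off {ι : Type*} [DecidableEq ι] {s : Finset ι} {i : ι}
    (hi : i ∈ s) {F G : ι → ℕ} (h : ∀ j ∈ s, j ≠ i → F j = G j) :
    ∑ j ∈ s, F j + G i = ∑ j ∈ s, G j + F i := by
  rw [← add_sum_erase s F hi, ← add_sum_erase s G hi,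
    sum_congr rfl fun j hj => h j (mem_of_mem_erase hj) (ne_of_mem_erase hj)]
  ring

namespace SPAST

section TieBreak

variable {α : Type*} [Fintype α]

noncomputable def tieBreak (r : α → ℕ) (e : α) : ℕ ×ₗ ℕ :=
  toLex (r e, (Fintype.equivFin α e : ℕ))

theorem tieBreak_injective (r : α → ℕ) : Function.Injective (tieBreak r) := fun _ _ h =>
  (Fintype.equivFin _).injective (Fin.val_injective (Prod.ext_iff.1 (toLex.injective h)).2)

theorem tieBreak_lt_tieBreak {r : α → ℕ} {e f : α} (h : r e < r f) :
    tieBreak r e < tieBreak r f :=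
  Prod.Lex.toLex_lt_toLex.2 (Or.inl h)

end TieBreak

section PairChoice

variable {σ π α : Type*} [LinearOrder α] (κ : σ × π → α)

def before [DecidableEq π] (Y : Finset (σ × π)) (q : π) (e : σ × π) : Finset (σ × π) :=
  {f ∈ Y | f.2 = q ∧ κ f < κ e}

def stuRejected [DecidableEq σ] (X : Finset (σ × π)) : Finset (σ × π) :=
  {e ∈ X | ∃ f ∈ X, f.1 = e.1 ∧ κ f < κ e}

def projCount [DecidableEq π] (Y : Finset (σ × π)) (q : π) : ℕ := #{f ∈ Y | f.2 = q}

theorem projCount_insert_of_notMem [DecidableEq σ] [DecidableEq π] {e : σ × π}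
    {Y : Finset (σ × π)} (he : e ∉ Y) : projCount (insert e Y) e.2 = projCount Y e.2 + 1 := by
  rw [projCount, filter_insert, if_pos rfl, card_insert_of_notMem fun h => he (mem_filter.1 h).1,
    projCount]

theorem projCount_insert_of_ne [DecidableEq σ] [DecidableEq π] {e : σ × π}
    {Y : Finset (σ × π)} {q : π} (hq : q ≠ e.2) : projCount (insert e Y) q = projCount Y q := by
  rw [projCount, filter_insert, if_neg hq.symm, projCount]

theorem before_mono [DecidableEq π] {Y Y' : Finset (σ × π)} (h : Y ⊆ Y') (q : π)
    (e : σ × π) : before κ Y q e ⊆ before κ Y' q e :=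
  filter_subset_filter _ h

theorem stuRejected_mono [DecidableEq σ] {X X' : Finset (σ × π)} (h : X ⊆ X') :
    stuRejected κ X ⊆ stuRejected κ X' := by
  intro e he
  obtain ⟨heX, f, hfX, hf⟩ := mem_filter.1 he
  exact mem_filter.2 ⟨h heX, f, h hfX, hf⟩

theorem card_sdiff_stuRejected [DecidableEq σ] [DecidableEq π] {κ : σ × π → α}
    (hκ : Function.Injective κ) (X : Finset (σ × π)) :
    #(X \ stuRejected κ X) = #(X.image Prod.fst) := by
  refine card_bij (fun e _ => e.1) (fun e he => mem_image_of_mem _ (mem_sdiff.1 he).1) ?_ ?_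
  · intro a ha b hb hab
    obtain ⟨haX, haR⟩ := mem_sdiff.1 ha
    obtain ⟨hbX, hbR⟩ := mem_sdiff.1 hb
    by_contra hne
    rcases lt_or_gt_of_ne (hκ.ne hne) with hlt | hlt
    · exact hbR (mem_filter.2 ⟨hbX, a, haX, hab, hlt⟩)
    · exact haR (mem_filter.2 ⟨haX, b, hbX, hab.symm, hlt⟩)
  · intro s hs
    obtain ⟨a, haX, rfl⟩ := mem_image.1 hs
    obtain ⟨g, hg, hmin⟩ :=
      exists_min_image {f ∈ X | f.1 = a.1} κ ⟨a, mem_filter.2 ⟨haX, rfl⟩⟩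
    obtain ⟨hgX, hg1⟩ := mem_filter.1 hg
    refine ⟨g, mem_sdiff.2 ⟨hgX, fun hR => ?_⟩, hg1⟩
    obtain ⟨-, f, hfX, hf1, hlt⟩ := mem_filter.1 hR
    exact (hmin f (mem_filter.2 ⟨hfX, hf1.trans hg1⟩)).not_gt hlt

theorem card_sdiff_stuRejected_le [DecidableEq σ] [DecidableEq π] {κ : σ × π → α}
    (hκ : Function.Injective κ) {X X' : Finset (σ × π)} (h : X ⊆ X') :
    #(X \ stuRejected κ X) ≤ #(X' \ stuRejected κ X') := by
  rw [card_sdiff_stuRejected hκ, card_sdiff_stuRejected hκ]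
  exact card_le_card (image_subset_image h)

end PairChoice

section Assignment

variable {S P : Type} [DecidableEq S] [DecidableEq P] {M : Finset (S × P)}

theorem mem_projAsg {p : P} {x : S} : x ∈ projAsg M p ↔ (x, p) ∈ M := by
  simp only [projAsg, mem_image, mem_filter]
  constructor
  · rintro ⟨⟨y, q⟩, ⟨hM, rfl⟩, rfl⟩
    exact hM
  · exact fun h => ⟨(x, p), ⟨h, rfl⟩, rfl⟩

theorem card_projAsg (p : P) : #(projAsg M p) = projCount M p :=
  card_image_of_injOn fun _ ha _ hb hab =>
    Prod.ext hab ((mem_filter.1 ha).2.trans (mem_filter.1 hb).2.symm)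

end Assignment

variable {S P L : Type} [Fintype S] [Fintype P] [Fintype L]
  [DecidableEq S] [DecidableEq P] [DecidableEq L] (I : SPAST S P L)

def LecPrefers (k : L) (x t : S) : Prop := I.lPref k x t ∧ ¬I.lPref k t x

def StuPrefers (s : S) (p q : P) : Prop := I.sPref s p q ∧ ¬I.sPref s q p

noncomputable def lecRank (k : L) (t : S) : ℕ :=
  #{x | (∃ p ∈ I.acc x, I.lec p = k) ∧ I.LecPrefers k x t}

noncomputable def stuRank (s : S) (p : P) : ℕ := #{q ∈ I.acc s | I.StuPrefers s q p}

variable {I}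

theorem LecPrefers.trans {k : L} {x y z : S} (hx : ∃ p ∈ I.acc x, I.lec p = k)
    (hy : ∃ p ∈ I.acc y, I.lec p = k) (hz : ∃ p ∈ I.acc z, I.lec p = k)
    (hxy : I.LecPrefers k x y) (hyz : I.LecPrefers k y z) : I.LecPrefers k x z :=
  ⟨I.lTrans k x y z hx hy hz hxy.1 hyz.1,
    fun hzx => hyz.2 (I.lTrans k z x y hz hx hy hzx hxy.1)⟩

theorem StuPrefers.trans {s : S} {p q r : P} (hp : p ∈ I.acc s) (hq : q ∈ I.acc s)
    (hr : r ∈ I.acc s) (hpq : I.StuPrefers s p q) (hqr : I.StuPrefers s q r) :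
    I.StuPrefers s p r :=
  ⟨I.sTrans s p hp q hq r hr hpq.1 hqr.1,
    fun hrp => hqr.2 (I.sTrans s r hr p hp q hq hrp hpq.1)⟩

theorem lecRank_lt_lecRank {k : L} {x t : S} (hx : ∃ p ∈ I.acc x, I.lec p = k)
    (ht : ∃ p ∈ I.acc t, I.lec p = k) (h : I.LecPrefers k x t) :
    I.lecRank k x < I.lecRank k t := by
  refine card_lt_card ((ssubset_iff_of_subset fun y hy => ?_).2 ⟨x, ?_, ?_⟩)
  · simp only [mem_filter, mem_univ, true_and] at hy ⊢
    exact ⟨hy.1, hy.2.trans hy.1 hx ht h⟩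
  · simpa using ⟨hx, h⟩
  · exact fun hmem => (mem_filter.1 hmem).2.2.2 (mem_filter.1 hmem).2.2.1

theorem stuRank_lt_stuRank {s : S} {p q : P} (hp : p ∈ I.acc s) (hq : q ∈ I.acc s)
    (h : I.StuPrefers s p q) : I.stuRank s p < I.stuRank s q := by
  refine card_lt_card ((ssubset_iff_of_subset fun r hr => ?_).2 ⟨p, ?_, ?_⟩)
  · simp only [mem_filter] at hr ⊢
    exact ⟨hr.1, hr.2.trans hr.1 hp hq h⟩
  · simpa using ⟨hp, h⟩
  · exact fun hmem => (mem_filter.1 hmem).2.2 (mem_filter.1 hmem).2.1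

variable (I) in
noncomputable def lecKey : S × P → ℕ ×ₗ ℕ := tieBreak fun e => I.lecRank (I.lec e.2) e.1

variable (I) in
noncomputable def stuKey : S × P → ℕ ×ₗ ℕ := tieBreak fun e => I.stuRank e.1 e.2

theorem lecKey_lt_lecKey {e f : S × P} (he : e.2 ∈ I.acc e.1) (hf : f.2 ∈ I.acc f.1)
    (hlec : I.lec e.2 = I.lec f.2) (h : I.LecPrefers (I.lec f.2) e.1 f.1) :
    I.lecKey e < I.lecKey f :=
  tieBreak_lt_tieBreak <| by
    rw [hlec]
    exact lecRank_lt_lecRank ⟨e.2, he, hlec⟩ ⟨f.2, hf, rfl⟩ h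

theorem stuKey_lt_stuKey {s : S} {p q : P} (hp : p ∈ I.acc s) (hq : q ∈ I.acc s)
    (h : I.StuPrefers s p q) : I.stuKey (s, p) < I.stuKey (s, q) :=
  tieBreak_lt_tieBreak (stuRank_lt_stuRank hp hq h)

section LecturerChoice

variable {α : Type*} [LinearOrder α] (κ : S × P → α)

variable (I) in
/-- The lecturers choose greedily from `Y` along `κ`: a pair is rejected when its project, or its
lecturer, is already filled by the pairs preceding it. -/
def LecRejects (Y : Finset (S × P)) (e : S × P) : Prop :=
  I.c e.2 ≤ #(before κ Y e.2 e) ∨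
    I.d (I.lec e.2) ≤ ∑ q with I.lec q = I.lec e.2, min (I.c q) #(before κ Y q e)

variable (I) in
noncomputable def lecRejected (Y : Finset (S × P)) : Finset (S × P) :=
  {e ∈ Y | I.LecRejects κ Y e}

theorem lecRejected_mono {Y Y' : Finset (S × P)} (h : Y ⊆ Y') :
    I.lecRejected κ Y ⊆ I.lecRejected κ Y' := by
  intro e he
  obtain ⟨heY, hrej⟩ := mem_filter.1 he
  refine mem_filter.2 ⟨h heY, hrej.imp (fun hc => hc.trans (card_le_card (before_mono κ h _ _)))
    fun hd => hd.trans (sum_le_sum fun q _ => ?_)⟩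
  exact min_le_min_left _ (card_le_card (before_mono κ h _ _))

variable (I) in
def greedySize (n : P → ℕ) : ℕ :=
  ∑ k, min (I.d k) (∑ q with I.lec q = k, min (I.c q) (n q))

theorem greedySize_of_succ {n n' : P → ℕ} {q₀ : P} (h₀ : n' q₀ = n q₀ + 1)
    (hne : ∀ q ≠ q₀, n' q = n q) :
    I.greedySize n' = I.greedySize n +
      if I.c q₀ ≤ n q₀ ∨ I.d (I.lec q₀) ≤ ∑ q with I.lec q = I.lec q₀, min (I.c q) (n q)
      then 0 else 1 := by
  have hinner := sum_add_eq_sum_add_of_eq_off (s := {q | I.lec q = I.lec q₀})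
    (F := fun q => min (I.c q) (n' q)) (G := fun q => min (I.c q) (n q))
    (mem_filter.2 ⟨mem_univ q₀, rfl⟩) fun q _ hq => by rw [hne q hq]
  have houter := sum_add_eq_sum_add_of_eq_off (s := univ)
    (F := fun k => min (I.d k) (∑ q with I.lec q = k, min (I.c q) (n' q)))
    (G := fun k => min (I.d k) (∑ q with I.lec q = k, min (I.c q) (n q)))
    (mem_univ (I.lec q₀)) fun k _ hk => by
      refine congrArg _ (sum_congr rfl fun q hq => ?_)
      rw [hne q fun h => hk (h ▸ (mem_filter.1 hq).2.symm)]
  simp only [h₀] at hinner houter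
  unfold greedySize
  split_ifs <;> omega

theorem card_filter_not_lecRejects {κ : S × P → α} (hκ : Function.Injective κ)
    (Y : Finset (S × P)) : #{e ∈ Y | ¬I.LecRejects κ Y e} = I.greedySize (projCount Y) := by
  induction Y using Finset.induction_on_max_value κ with
  | empty => simp [greedySize, projCount]
  | insert e₀ Z he₀ hmax ih =>
    have hlt : ∀ f ∈ Z, κ f < κ e₀ := fun f hf =>
      (hmax f hf).lt_of_ne (hκ.ne (ne_of_mem_of_not_mem hf he₀))
    have hbefore : ∀ e ∈ Z, ∀ q, before κ (insert e₀ Z) q e = before κ Z q e := by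
      intro e he q
      rw [before, filter_insert, if_neg fun h => (hlt e he).not_gt h.2, before]
    have hbefore₀ : ∀ q, before κ (insert e₀ Z) q e₀ = {f ∈ Z | f.2 = q} := by
      intro q
      rw [before, filter_insert, if_neg fun h => lt_irrefl _ h.2]
      exact filter_congr fun f hf => and_iff_left (hlt f hf)
    have hrej : ∀ e ∈ Z, (¬I.LecRejects κ (insert e₀ Z) e ↔ ¬I.LecRejects κ Z e) := by
      intro e he
      simp only [LecRejects, hbefore e he]
    have hrej₀ : I.LecRejects κ (insert e₀ Z) e₀ ↔ I.c e₀.2 ≤ projCount Z e₀.2 ∨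
        I.d (I.lec e₀.2) ≤ ∑ q with I.lec q = I.lec e₀.2, min (I.c q) (projCount Z q) := by
      simp only [LecRejects, hbefore₀, projCount]
    rw [greedySize_of_succ (projCount_insert_of_notMem he₀) fun q hq => projCount_insert_of_ne hq,
      ← ih, filter_insert, filter_congr hrej]
    by_cases h : I.LecRejects κ (insert e₀ Z) e₀
    · rw [if_neg (not_not_intro h), if_pos (hrej₀.1 h), add_zero]
    · rw [if_pos h, if_neg (mt hrej₀.2 h),
        card_insert_of_notMem fun h' => he₀ (mem_filter.1 h').1]

theorem greedySize_mono : Monotone I.greedySize := fun _ _ h =>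
  sum_le_sum fun _ _ => min_le_min_left _ (sum_le_sum fun q _ => min_le_min_left _ (h q))

theorem card_sdiff_lecRejected_le {κ : S × P → α} (hκ : Function.Injective κ)
    {Y Y' : Finset (S × P)} (h : Y ⊆ Y') :
    #(Y \ I.lecRejected κ Y) ≤ #(Y' \ I.lecRejected κ Y') := by
  rw [lecRejected, lecRejected, ← filter_not, ← filter_not, card_filter_not_lecRejects hκ,
    card_filter_not_lecRejects hκ]
  exact greedySize_mono fun q => card_le_card (filter_subset_filter _ h)

end LecturerChoice

section Matching

variable {M : Finset (S × P)}

theorem mem_lecAsg {k : L} {x : S} : x ∈ lecAsg I M k ↔ ∃ q, (x, q) ∈ M ∧ I.lec q = k := by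
  simp only [lecAsg, mem_image, mem_filter]
  constructor
  · rintro ⟨⟨y, q⟩, ⟨hM, hq⟩, rfl⟩
    exact ⟨q, hM, hq⟩
  · rintro ⟨q, hM, hq⟩
    exact ⟨(x, q), ⟨hM, hq⟩, rfl⟩

theorem IsMatching.card_lecAsg (hM : I.IsMatching M) (k : L) :
    #(lecAsg I M k) = #{f ∈ M | I.lec f.2 = k} :=
  card_image_of_injOn fun a ha b hb hab =>
    Prod.ext hab (hM.2.1 a.1 a.2 b.2 (mem_filter.1 ha).1 (hab ▸ (mem_filter.1 hb).1))

theorem card_filter_lec_eq_sum (M : Finset (S × P)) (k : L) :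
    #{f ∈ M | I.lec f.2 = k} = ∑ q with I.lec q = k, projCount M q := by
  rw [card_eq_sum_card_fiberwise (f := Prod.snd) (t := {q | I.lec q = k})
    fun f hf => mem_filter.2 ⟨mem_univ f.2, (mem_filter.1 hf).2⟩]
  refine sum_congr rfl fun q hq => congrArg card ?_
  rw [filter_filter]
  exact filter_congr fun f _ => ⟨fun h => h.2, fun h => ⟨h ▸ (mem_filter.1 hq).2, h⟩⟩

end Matching

theorem forall_lecPrefers_of_not_exists_worstIn {k : L} {T : Finset S} {s : S}
    (hT : T.Nonempty) (hrel : ∀ t ∈ T, ∃ p ∈ I.acc t, I.lec p = k)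
    (hs : ∃ p ∈ I.acc s, I.lec p = k) (h : ¬∃ t, I.WorstIn k T t ∧ I.lPref k s t) :
    ∀ x ∈ T, I.LecPrefers k x s := by
  obtain ⟨w, hwT, hmax⟩ := exists_max_image T (I.lecRank k) hT
  have hworst : I.WorstIn k T w := by
    refine ⟨hwT, fun x hx => ?_⟩
    by_contra hxw
    have hwx := (I.lTotal k x w (hrel x hx) (hrel w hwT)).resolve_left hxw
    exact (lecRank_lt_lecRank (hrel w hwT) (hrel x hx) ⟨hwx, hxw⟩).not_ge (hmax x hx)
  have hsw : ¬I.lPref k s w := fun hsw => h ⟨w, hworst, hsw⟩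
  intro x hx
  have hsx : ¬I.lPref k s x := fun hsx =>
    hsw (I.lTrans k s x w hs (hrel x hx) (hrel w hwT) hsx (hworst.2 x hx))
  exact ⟨(I.lTotal k x s (hrel x hx) hs).resolve_right hsx, hsx⟩

section FixedPoint

variable (I) in
def acceptablePairs : Finset (S × P) := {e | e.2 ∈ I.acc e.1}

variable (I) in
noncomputable def lowerPairs (M : Finset (S × P)) : Finset (S × P) :=
  {e ∈ I.acceptablePairs | e ∈ M ∨ ∃ q, (e.1, q) ∈ M ∧ I.StuPrefers e.1 q e.2}

variable (I) in
noncomputable def upperPairs (M : Finset (S × P)) : Finset (S × P) :=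
  {e ∈ I.acceptablePairs | e ∈ M ∨ ∀ q, (e.1, q) ∈ M → ¬I.StuPrefers e.1 q e.2}

variable {M : Finset (S × P)}

theorem mem_acceptablePairs {e : S × P} : e ∈ I.acceptablePairs ↔ e.2 ∈ I.acc e.1 := by
  simp [acceptablePairs]

theorem acceptablePairs_sdiff_lowerPairs_sdiff :
    I.acceptablePairs \ (I.lowerPairs M \ M) = I.upperPairs M := by
  ext e
  by_cases he : e ∈ M <;> simp [lowerPairs, upperPairs, he, imp_or]

theorem acceptablePairs_sdiff_upperPairs_sdiff :
    I.acceptablePairs \ (I.upperPairs M \ M) = I.lowerPairs M := by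
  ext e
  by_cases he : e ∈ M <;> simp [lowerPairs, upperPairs, he, imp_or]

theorem IsMatching.subset_lowerPairs (hM : I.IsMatching M) : M ⊆ I.lowerPairs M :=
  fun e he => mem_filter.2 ⟨mem_acceptablePairs.2 (hM.1 e he), Or.inl he⟩

theorem IsMatching.subset_upperPairs (hM : I.IsMatching M) : M ⊆ I.upperPairs M :=
  fun e he => mem_filter.2 ⟨mem_acceptablePairs.2 (hM.1 e he), Or.inl he⟩

theorem IsMatching.stuRejected_lowerPairs (hM : I.IsMatching M) :
    stuRejected I.stuKey (I.lowerPairs M) = I.lowerPairs M \ M := by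
  ext ⟨s, p⟩
  simp only [stuRejected, mem_filter, mem_sdiff, and_congr_right_iff]
  intro hsp
  constructor
  · rintro ⟨⟨t, q⟩, hq, ht, hlt⟩ hpM
    dsimp only at ht
    subst t
    obtain ⟨-, hqM | ⟨r, hrM, hr⟩⟩ := mem_filter.1 hq
    · exact hlt.ne (congrArg _ (Prod.ext rfl (hM.2.1 s q p hqM hpM)))
    · obtain rfl := hM.2.1 s r p hrM hpM
      have hq_acc : q ∈ I.acc s := mem_acceptablePairs.1 (mem_filter.1 hq).1
      exact (stuKey_lt_stuKey (hM.1 _ hrM) hq_acc hr).asymm hlt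
  · intro hpM
    obtain ⟨hacc, hpM' | ⟨q, hqM, hq⟩⟩ := mem_filter.1 hsp
    · exact absurd hpM' hpM
    · exact ⟨(s, q), hM.subset_lowerPairs hqM, rfl,
        stuKey_lt_stuKey (hM.1 _ hqM) (mem_acceptablePairs.1 hacc) hq⟩

/-- The preferences here are strict, which is what makes the tie-breaking irrelevant. -/
theorem SuperStable.full_of_mem_upperPairs (hM : I.SuperStable M) {e : S × P}
    (he : e ∈ I.upperPairs M) (heM : e ∉ M) :
    (projCount M e.2 = I.c e.2 ∧
      ∀ f ∈ M, f.2 = e.2 → I.LecPrefers (I.lec e.2) f.1 e.1) ∨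
    (#{f ∈ M | I.lec f.2 = I.lec e.2} = I.d (I.lec e.2) ∧
      ∀ f ∈ M, I.lec f.2 = I.lec e.2 → I.LecPrefers (I.lec e.2) f.1 e.1) := by
  obtain ⟨s, p⟩ := e
  obtain ⟨hacc, hpM | hpref⟩ := mem_filter.1 he
  · exact absurd hpM heM
  have hp := mem_acceptablePairs.1 hacc
  have hnb : ¬_ := fun hblock => hM.2 s p ⟨hp, heM, hpref, hblock⟩
  simp only [not_or, not_and] at hnb
  obtain ⟨hlec_not_free, hlec_full_not, hproj_full_not⟩ := hnb
  by_cases hfull : projCount M p = I.c p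
  · left
    refine ⟨hfull, ?_⟩
    rintro ⟨x, q⟩ hx hqp
    dsimp only at hqp
    subst q
    refine forall_lecPrefers_of_not_exists_worstIn ?_ (fun t ht => ?_) ⟨p, hp, rfl⟩
      (hproj_full_not ((card_projAsg p).trans hfull)) x (mem_projAsg.2 hx)
    · rw [← card_pos, card_projAsg, hfull]
      exact I.cpos p
    · exact ⟨p, hM.1.1 _ (mem_projAsg.1 ht), rfl⟩
  · right
    have hproj_lt : #(projAsg M p) < I.c p :=
      (card_projAsg p).trans_lt ((hM.1.2.2.1 p).lt_of_ne hfull)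
    have hlec_full : #(lecAsg I M (I.lec p)) = I.d (I.lec p) :=
      (hM.1.card_lecAsg _ ▸ hM.1.2.2.2 _).antisymm (not_lt.1 (hlec_not_free hproj_lt))
    refine ⟨hM.1.card_lecAsg _ ▸ hlec_full, fun f hf hfk => ?_⟩
    refine forall_lecPrefers_of_not_exists_worstIn ?_ (fun t ht => ?_) ⟨p, hp, rfl⟩
      (hlec_full_not hproj_lt hlec_full).2 f.1 (mem_lecAsg.2 ⟨f.2, hf, hfk⟩)
    · rw [← card_pos, hlec_full]
      exact I.dpos _
    · obtain ⟨q, hq, hqk⟩ := mem_lecAsg.1 ht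
      exact ⟨q, hM.1.1 _ hq, hqk⟩

theorem IsMatching.mem_before_upperPairs (hM : I.IsMatching M) {e f : S × P}
    (he : e.2 ∈ I.acc e.1) (hf : f ∈ M) (hlec : I.lec f.2 = I.lec e.2)
    (h : I.LecPrefers (I.lec e.2) f.1 e.1) : f ∈ before I.lecKey (I.upperPairs M) f.2 e :=
  mem_filter.2 ⟨hM.subset_upperPairs hf, rfl, lecKey_lt_lecKey (hM.1 f hf) he hlec h⟩

theorem SuperStable.lecRejects_of_not_mem (hM : I.SuperStable M) {e : S × P}
    (he : e ∈ I.upperPairs M) (heM : e ∉ M) : I.LecRejects I.lecKey (I.upperPairs M) e := by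
  have hacc := mem_acceptablePairs.1 (mem_filter.1 he).1
  rcases hM.full_of_mem_upperPairs he heM with ⟨hfull, hpref⟩ | ⟨hfull, hpref⟩
  · left
    rw [← hfull]
    refine card_le_card fun f hf => ?_
    obtain ⟨hfM, hfp⟩ := mem_filter.1 hf
    exact hfp ▸ hM.1.mem_before_upperPairs hacc hfM (hfp ▸ rfl) (hpref f hfM hfp)
  · right
    rw [← hfull, card_filter_lec_eq_sum]
    refine sum_le_sum fun q hq => le_min (hM.1.2.2.1 q) (card_le_card fun f hf => ?_)
    obtain ⟨hfM, hfq⟩ := mem_filter.1 hf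
    have hfk : I.lec f.2 = I.lec e.2 := hfq ▸ (mem_filter.1 hq).2
    exact hfq ▸ hM.1.mem_before_upperPairs hacc hfM hfk (hpref f hfM hfk)

theorem SuperStable.before_upperPairs_subset (hM : I.SuperStable M) {m : S × P} (hm : m ∈ M)
    {q : P} (hq : I.lec q = I.lec m.2) (hfree : q = m.2 ∨ projCount M q < I.c q) :
    before I.lecKey (I.upperPairs M) q m ⊆ {f ∈ M | f.2 = q} := by
  intro g hg
  obtain ⟨hgY, rfl, hlt⟩ := mem_filter.1 hg
  refine mem_filter.2 ⟨?_, rfl⟩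
  by_contra hgM
  have hm_acc := hM.1.1 m hm
  have hg_acc := mem_acceptablePairs.1 (mem_filter.1 hgY).1
  rcases hM.full_of_mem_upperPairs hgY hgM with ⟨hfull, hpref⟩ | ⟨-, hpref⟩
  · rcases hfree with hgm | hfree
    · exact (lecKey_lt_lecKey hm_acc hg_acc (congrArg _ hgm.symm) (hpref m hm hgm.symm)).asymm hlt
    · exact hfree.ne hfull
  · exact (lecKey_lt_lecKey hm_acc hg_acc hq.symm (hpref m hm hq.symm)).asymm hlt

theorem SuperStable.not_lecRejects_of_mem (hM : I.SuperStable M) {m : S × P} (hm : m ∈ M) :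
    ¬I.LecRejects I.lecKey (I.upperPairs M) m := by
  have hm_lt : #(before I.lecKey (I.upperPairs M) m.2 m) < projCount M m.2 :=
    card_lt_card ((ssubset_iff_of_subset (hM.before_upperPairs_subset hm rfl (Or.inl rfl))).2
      ⟨m, mem_filter.2 ⟨hm, rfl⟩, fun h => lt_irrefl _ (mem_filter.1 h).2.2⟩)
  have hle : ∀ q ∈ ({q | I.lec q = I.lec m.2} : Finset P),
      min (I.c q) #(before I.lecKey (I.upperPairs M) q m) ≤ projCount M q := by
    intro q hq
    rcases (hM.1.2.2.1 q).lt_or_eq with hlt | heq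
    · exact (min_le_right _ _).trans
        (card_le_card (hM.before_upperPairs_subset hm (mem_filter.1 hq).2 (Or.inr hlt)))
    · exact (min_le_left _ _).trans heq.ge
  rintro (hc | hd)
  · exact (hc.trans_lt hm_lt).not_ge (hM.1.2.2.1 m.2)
  · have hsum := sum_lt_sum hle
      ⟨m.2, mem_filter.2 ⟨mem_univ _, rfl⟩, (min_le_right _ _).trans_lt hm_lt⟩
    rw [← card_filter_lec_eq_sum] at hsum
    exact (hd.trans_lt hsum).not_ge (hM.1.2.2.2 _)

theorem SuperStable.lecRejected_upperPairs (hM : I.SuperStable M) :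
    I.lecRejected I.lecKey (I.upperPairs M) = I.upperPairs M \ M := by
  ext e
  simp only [lecRejected, mem_filter, mem_sdiff, and_congr_right_iff]
  exact fun he =>
    ⟨fun hrej heM => hM.not_lecRejects_of_mem heM hrej, hM.lecRejects_of_not_mem he⟩

end FixedPoint

section StabilityOperator

open OrderDual

variable (I) in
/-- The fixed points `(X, Y)` are the stable allocations of the choice functions: `X` is what the
lecturers do not reject from `Y`, and `Y` what the students do not reject from `X`. -/
noncomputable def stabilityOp :
    Finset (S × P) × (Finset (S × P))ᵒᵈ →o Finset (S × P) × (Finset (S × P))ᵒᵈ where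
  toFun XY := (I.acceptablePairs \ I.lecRejected I.lecKey (ofDual XY.2),
    toDual (I.acceptablePairs \ stuRejected I.stuKey XY.1))
  monotone' _ _ h := ⟨sdiff_subset_sdiff le_rfl (lecRejected_mono _ h.2),
    sdiff_subset_sdiff le_rfl (stuRejected_mono _ h.1)⟩

variable {M : Finset (S × P)}

theorem SuperStable.isFixedPt_stabilityOp (hM : I.SuperStable M) :
    Function.IsFixedPt I.stabilityOp (I.lowerPairs M, toDual (I.upperPairs M)) :=
  Prod.ext ((congrArg _ hM.lecRejected_upperPairs).trans acceptablePairs_sdiff_upperPairs_sdiff)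
    (congrArg toDual ((congrArg _ hM.1.stuRejected_lowerPairs).trans
      acceptablePairs_sdiff_lowerPairs_sdiff))

theorem card_sdiff_lecRejected_eq_of_isFixedPt
    {XY : Finset (S × P) × (Finset (S × P))ᵒᵈ} (h : Function.IsFixedPt I.stabilityOp XY) :
    #(ofDual XY.2 \ I.lecRejected I.lecKey (ofDual XY.2)) =
      #(XY.1 \ stuRejected I.stuKey XY.1) := by
  obtain ⟨X, Y⟩ := XY
  have hX : I.acceptablePairs \ I.lecRejected I.lecKey (ofDual Y) = X := congrArg Prod.fst h
  have hY : I.acceptablePairs \ stuRejected I.stuKey X = ofDual Y :=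
    congrArg (ofDual ∘ Prod.snd) h
  congr 1
  ext e
  have hXe : e ∈ X ↔ e ∈ I.acceptablePairs ∧ e ∉ I.lecRejected I.lecKey (ofDual Y) := by
    rw [← hX, mem_sdiff]
  have hYe : e ∈ ofDual Y ↔ e ∈ I.acceptablePairs ∧ e ∉ stuRejected I.stuKey X := by
    rw [← hY, mem_sdiff]
  simp only [mem_sdiff, hXe, hYe]
  tauto

theorem SuperStable.card_eq_of_isLeast (hM : I.SuperStable M)
    {XY : Finset (S × P) × (Finset (S × P))ᵒᵈ}
    (h : IsLeast (Function.fixedPoints I.stabilityOp) XY) :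
    #M = #(XY.1 \ stuRejected I.stuKey XY.1) := by
  obtain ⟨hX, hY⟩ := h.2 hM.isFixedPt_stabilityOp
  refine le_antisymm ?_ ?_
  · calc #M = #(I.upperPairs M \ I.lecRejected I.lecKey (I.upperPairs M)) := by
          rw [hM.lecRejected_upperPairs, Finset.sdiff_sdiff_eq_self hM.1.subset_upperPairs]
      _ ≤ #(ofDual XY.2 \ I.lecRejected I.lecKey (ofDual XY.2)) :=
          card_sdiff_lecRejected_le (tieBreak_injective _) hY
      _ = _ := card_sdiff_lecRejected_eq_of_isFixedPt h.1
  · calc #(XY.1 \ stuRejected I.stuKey XY.1)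
        ≤ #(I.lowerPairs M \ stuRejected I.stuKey (I.lowerPairs M)) :=
          card_sdiff_stuRejected_le (tieBreak_injective _) hX
      _ = #M := by
          rw [hM.1.stuRejected_lowerPairs, Finset.sdiff_sdiff_eq_self hM.1.subset_lowerPairs]

end StabilityOperator

end SPAST

open SPAST in
theorem super_stable_card_eq {S P L : Type} [Fintype S] [Fintype P] [Fintype L]
    [DecidableEq S] [DecidableEq P] [DecidableEq L]
    (I : SPAST S P L) (M1 M2 : Finset (S × P))
    (h1 : SuperStable I M1) (h2 : SuperStable I M2) :
    M1.card = M2.card := by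
  let _ := Fintype.toCompleteLattice (Finset (S × P) × (Finset (S × P))ᵒᵈ)
  have hleast := I.stabilityOp.isLeast_lfp
  rw [h1.card_eq_of_isLeast hleast, h2.card_eq_of_isLeast hleast]
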